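/- arXiv:1512.01281 — 4 statements merged into one kernel-verified Lean document; each statement's English description precedes it below -/
import Mathlib

section
/- Let G be a connected finite simple graph with δ̂-thin triangles. Let u, v be vertices with d(u,v) even, let α be a shortest walk from u to v, and let r be the vertex on α with d(u,r) = d(u,v)/2. Let x be a vertex with 2·d(u,x) < d(u,v) and let y be a vertex with d(u,y) > d(y,v). Then every shortest walk from x to y contains a vertex w with d(r,w) ≤ 2δ̂. -/
/-- The Gromov product `(x.y)_r` with respect to the shortest-path distance of a graph. -/
noncomputable def gp {V : Type*} (G : SimpleGraph V) (r x y : V) : ℝ :=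
  ((G.dist x r : ℝ) + (G.dist y r : ℝ) - (G.dist x y : ℝ)) / 2

/-- `G` has `δ`-thin triangles. -/
def ThinTriangles {V : Type*} (G : SimpleGraph V) (δ : ℝ) : Prop :=
  ∀ x y z : V, ∀ p : G.Walk x y, ∀ q : G.Walk x z,
    p.length = G.dist x y → q.length = G.dist x z →
    ∀ k : ℕ, (k : ℝ) ≤ gp G x y z →
      (G.dist (p.getVert k) (q.getVert k) : ℝ) ≤ δ

private lemma getVert_mem_support' {V : Type*} {G : SimpleGraph V} {a b : V}
    (p : G.Walk a b) (i : ℕ) : p.getVert i ∈ p.support := by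
  rcases le_or_gt i p.length with h | h
  · exact SimpleGraph.Walk.mem_support_iff_exists_getVert.2 ⟨i, rfl, h⟩
  · rw [p.getVert_of_length_le h.le]
    exact p.end_mem_support

/-- If `2d(u,x) < d(u,v)`, `y` is in the half-space `d(u,y) > d(y,v)` determined by a
shortest walk `α` from `u` to `v` with midpoint `r`, then every shortest walk from `x`
to `y` passes within `2δ̂` of `r`. -/
theorem stmt13 {V : Type*} [Fintype V] (G : SimpleGraph V) (hconn : G.Connected)
    (δ : ℝ) (hδ : 0 ≤ δ) (hthin : ThinTriangles G δ)
    (u v : V) (heven : Even (G.dist u v))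
    (α : G.Walk u v) (hα : α.length = G.dist u v)
    (x : V) (hx : 2 * G.dist u x < G.dist u v)
    (y : V) (hy : G.dist y v < G.dist u y) :
    ∀ q : G.Walk x y, q.length = G.dist x y →
      ∃ w ∈ q.support, (G.dist (α.getVert (G.dist u v / 2)) w : ℝ) ≤ 2 * δ := by
  intro q hq
  obtain ⟨m, hm⟩ := heven
  have hm2 : G.dist u v = 2 * m := by omega
  have hmdef : G.dist u v / 2 = m := by omega
  -- a geodesic from u to y
  obtain ⟨γ, hγ⟩ := hconn.exists_walk_length_eq_dist u y
  have htri : G.dist u v ≤ G.dist u y + G.dist y v := hconn.dist_triangle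
  have hmd1 : m < G.dist u y := by omega
  -- first thin triangle application, apex u
  have h1 : (G.dist (α.getVert m) (γ.getVert m) : ℝ) ≤ δ := by
    refine hthin u v y α γ hα hγ m ?_
    have h1 : (G.dist y v : ℝ) < (G.dist u y : ℝ) := Nat.cast_lt.mpr hy
    have h2 : (G.dist u v : ℝ) = 2 * m := by exact_mod_cast hm2
    have e1 : (G.dist v u : ℝ) = (G.dist u v : ℝ) := by rw [SimpleGraph.dist_comm]
    have e2 : (G.dist y u : ℝ) = (G.dist u y : ℝ) := by rw [SimpleGraph.dist_comm]
    have e3 : (G.dist v y : ℝ) = (G.dist y v : ℝ) := by rw [SimpleGraph.dist_comm]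
    simp only [gp, e1, e2, e3]
    linarith
  -- second thin triangle application, apex y
  set k := G.dist u y - m with hk
  have hqlen : q.reverse.length = G.dist y x := by
    rw [SimpleGraph.Walk.length_reverse, hq, G.dist_comm]
  have hγlen : γ.reverse.length = G.dist y u := by
    rw [SimpleGraph.Walk.length_reverse, hγ, G.dist_comm]
  have htri2 : G.dist u y ≤ G.dist u x + G.dist x y := hconn.dist_triangle
  have h2 : (G.dist (q.reverse.getVert k) (γ.reverse.getVert k) : ℝ) ≤ δ := by
    refine hthin y x u q.reverse γ.reverse hqlen hγlen k ?_
    have hkc : (k : ℝ) = (G.dist u y : ℝ) - m := by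
      rw [hk]; push_cast [Nat.cast_sub hmd1.le]; ring
    have c1 : (G.dist u y : ℝ) ≤ (G.dist u x : ℝ) + (G.dist x y : ℝ) := by
      exact_mod_cast htri2
    have c2 : 2 * (G.dist u x : ℝ) < 2 * m := by
      have : (2 * G.dist u x : ℕ) < 2 * m := by omega
      exact_mod_cast this
    have e1 : (G.dist x y : ℝ) = (G.dist y x : ℝ) := by rw [SimpleGraph.dist_comm]
    have e2 : (G.dist u y : ℝ) = (G.dist y u : ℝ) := by rw [SimpleGraph.dist_comm]
    have e3 : (G.dist x u : ℝ) = (G.dist u x : ℝ) := by rw [SimpleGraph.dist_comm]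
    simp only [gp, ← e1, ← e2, e3]
    rw [hkc]
    linarith
  -- the reverse of γ at k is γ at m
  have hγrev : γ.reverse.getVert k = γ.getVert m := by
    rw [SimpleGraph.Walk.getVert_reverse, hγ]
    congr 1
    omega
  rw [hγrev] at h2
  refine ⟨q.reverse.getVert k, ?_, ?_⟩
  · have := getVert_mem_support' q.reverse k
    rwa [SimpleGraph.Walk.support_reverse, List.mem_reverse] at this
  · rw [hmdef]
    have htri3 : G.dist (α.getVert m) (q.reverse.getVert k) ≤
        G.dist (α.getVert m) (γ.getVert m) + G.dist (γ.getVert m) (q.reverse.getVert k) :=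
      hconn.dist_triangle
    have hcast : (G.dist (α.getVert m) (q.reverse.getVert k) : ℝ) ≤
        (G.dist (α.getVert m) (γ.getVert m) : ℝ) +
        (G.dist (γ.getVert m) (q.reverse.getVert k) : ℝ) := by exact_mod_cast htri3
    have e4 : (G.dist (γ.getVert m) (q.reverse.getVert k) : ℝ) =
        (G.dist (q.reverse.getVert k) (γ.getVert m) : ℝ) := by rw [SimpleGraph.dist_comm]
    rw [e4] at hcast
    linarith
end

section
/- Let G be a connected finite simple graph with δ̂-thin triangles whose distance satisfies the four-point condition with constant δ. Let u₀, v₀ be vertices with d(u₀,v₀) = diam(G) even, and let r be the vertex at distance diam(G)/2 from u₀ on a shortest walk from u₀ to v₀. Let t ≥ 0 and let x, y be vertices lying on a shortest walk p from a vertex u to a vertex w with d(u,w) even and d(u,w) > max(diam(G) − t, 2·d(x,u), 2·d(y,w)). Then the portion of p between x and y (which is a shortest walk from x to y) contains a vertex r' with d(r,r') ≤ t/2 + 4δ̂ + 2δ. -/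
open SimpleGraph

lemma dist_getVert_le' {V : Type*} (G : SimpleGraph V) (hconn : G.Connected) {u w : V}
    (p : G.Walk u w) : ∀ n k, k + n ≤ p.length →
    G.dist (p.getVert k) (p.getVert (k + n)) ≤ n := by
  intro n
  induction n with
  | zero => intro k _; simp
  | succ n ih =>
    intro k h
    have h1 := ih k (by omega)
    have h2 : G.Adj (p.getVert (k + n)) (p.getVert (k + n + 1)) :=
      p.adj_getVert_succ (by omega)
    have h3 : G.dist (p.getVert (k + n)) (p.getVert (k + n + 1)) ≤ 1 := by
      simpa using G.dist_le h2.toWalk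
    calc G.dist (p.getVert k) (p.getVert (k + (n + 1)))
        ≤ G.dist (p.getVert k) (p.getVert (k + n))
          + G.dist (p.getVert (k + n)) (p.getVert (k + n + 1)) := by
          exact hconn.dist_triangle
      _ ≤ n + 1 := by omega

lemma geo_dist' {V : Type*} (G : SimpleGraph V) (hconn : G.Connected) {u w : V}
    (p : G.Walk u w) (hp : p.length = G.dist u w) {k l : ℕ} (hkl : k ≤ l)
    (hl : l ≤ p.length) : G.dist (p.getVert k) (p.getVert l) = l - k := by
  have hub : G.dist (p.getVert k) (p.getVert l) ≤ l - k := by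
    have := dist_getVert_le' G hconn p (l - k) k (by omega)
    rwa [Nat.add_sub_cancel' hkl] at this
  have h1 : G.dist u (p.getVert k) ≤ k := by
    have := dist_getVert_le' G hconn p k 0 (by omega)
    simpa [p.getVert_zero] using this
  have h2 : G.dist (p.getVert l) w ≤ p.length - l := by
    have := dist_getVert_le' G hconn p (p.length - l) l (by omega)
    rw [Nat.add_sub_cancel' hl] at this
    simpa [p.getVert_length] using this
  have h3 : G.dist u w ≤ G.dist u (p.getVert k) + G.dist (p.getVert k) (p.getVert l)
      + G.dist (p.getVert l) w :=
    le_trans hconn.dist_triangle (by gcongr; exact hconn.dist_triangle)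
  omega


lemma key15 {V : Type*} [Fintype V] (G : SimpleGraph V) (hconn : G.Connected)
    (δ' δ t : ℝ) (hδ' : 0 ≤ δ') (hδ : 0 ≤ δ)
    (hthin : ThinTriangles G δ')
    (hfour : ∀ a b c d : V, (G.dist a b : ℝ) + (G.dist c d : ℝ) ≤
      max ((G.dist a c : ℝ) + (G.dist b d : ℝ)) ((G.dist a d : ℝ) + (G.dist b c : ℝ))
        + 2 * δ)
    (A B : V) (hDd : G.dist A B = G.diam) (heD : Even (G.dist A B))
    (P : G.Walk B A) (hP : P.length = G.dist B A)
    (u w x y : V) (p : G.Walk u w) (hp : p.length = G.dist u w)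
    (hew : Even (G.dist u w))
    (hlong : (G.dist u w : ℝ) > (G.diam : ℝ) - t)
    (hxu : G.dist u w > 2 * G.dist x u) (hyw : G.dist u w > 2 * G.dist y w)
    (i j : ℕ) (hij : i ≤ j) (hj : j ≤ p.length)
    (hx : p.getVert i = x) (hy : p.getVert j = y)
    (hswap : G.dist u A ≤ G.dist u B) :
    ∃ m : ℕ, i ≤ m ∧ m ≤ j ∧
      (G.dist (P.getVert (G.dist A B / 2)) (p.getVert m) : ℝ) ≤
        t / 2 + 4 * δ' + 2 * δ := by
  have hne : G.ediam ≠ ⊤ := by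
    have : Nonempty V := hconn.nonempty
    obtain ⟨u', v', h'⟩ := G.exists_edist_eq_ediam_of_finite
    rw [← h']
    exact SimpleGraph.edist_ne_top_iff_reachable.mpr (hconn.preconnected u' v')
  -- abbreviations
  set D := G.dist A B with hD
  set L := G.dist u w with hL
  set a := G.dist u B with ha
  set b := G.dist w B with hb
  set e := G.dist u A with he
  set f := G.dist w A with hf
  -- basic distance facts
  have haD : a ≤ D := hDd ▸ G.dist_le_diam hne
  have hbD : b ≤ D := hDd ▸ G.dist_le_diam hne
  have heDl : e ≤ D := hDd ▸ G.dist_le_diam hne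
  have hfD : f ≤ D := hDd ▸ G.dist_le_diam hne
  have hLD : L ≤ D := hDd ▸ G.dist_le_diam hne
  have hDae : D ≤ e + a := by
    have h := hconn.dist_triangle (u := A) (v := u) (w := B)
    rwa [G.dist_comm (u := A) (v := u), ← he, ← ha, ← hD] at h
  have hbLa : b ≤ L + a := by
    have h := hconn.dist_triangle (u := w) (v := u) (w := B)
    rwa [G.dist_comm (u := w) (v := u), ← hL, ← ha, ← hb] at h
  have haLb : a ≤ L + b := by
    have h := hconn.dist_triangle (u := u) (v := w) (w := B)
    rwa [← hL, ← hb, ← ha] at h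
  have hDcast : (G.diam : ℝ) = (D : ℝ) := by rw [← hDd]
  have hDL : (D : ℝ) - t < L := by rw [hDcast] at hlong; linarith
  -- the four-point condition gives a ≥ L - 2δ
  have ha2 : (L : ℝ) - 2 * δ ≤ (a : ℝ) := by
    have h4 := hfour u w A B
    rw [← hL, ← hD, ← he, ← hb, ← ha, ← hf] at h4
    have hea : (e : ℝ) ≤ (a : ℝ) := by exact_mod_cast hswap
    have hbD' : (b : ℝ) ≤ (D : ℝ) := by exact_mod_cast hbD
    have hfD' : (f : ℝ) ≤ (D : ℝ) := by exact_mod_cast hfD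
    rcases le_total ((a : ℝ) + (f : ℝ)) ((e : ℝ) + (b : ℝ)) with hm | hm
    · rw [max_eq_left hm] at h4; linarith
    · rw [max_eq_right hm] at h4; linarith
  -- facts about i and j
  have hdux : G.dist u x = i := by
    subst hx
    have h := geo_dist' G hconn p hp (Nat.zero_le i) (le_trans hij hj)
    simpa [p.getVert_zero] using h
  have hi2 : 2 * i < L := by
    rwa [G.dist_comm (u := x) (v := u), hdux] at hxu
  have hdyw : G.dist y w = p.length - j := by
    subst hy
    have h := geo_dist' G hconn p hp hj (le_refl p.length)
    simpa [p.getVert_length] using h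
  have hpl : p.length = L := hp
  have hj2 : L < 2 * j := by
    rw [hdyw, hpl] at hyw; omega
  have hjL : j ≤ L := hpl ▸ hj
  -- geodesic from u to B
  obtain ⟨q, hq⟩ := hconn.exists_walk_length_eq_dist u B
  rw [← ha] at hq
  -- index definitions
  have haD2 : D ≤ 2 * a := by omega
  set k0 : ℕ := a - D / 2 with hk0
  set P1n : ℕ := (L + a - b) / 2 with hP1n
  set k : ℕ := min k0 P1n with hk
  set m : ℕ := max i (min k j) with hm
  have him : i ≤ m := le_max_left _ _
  have hmj : m ≤ j := max_le hij (min_le_right _ _)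
  refine ⟨m, him, hmj, ?_⟩
  obtain ⟨D2, hD2e⟩ := heD
  obtain ⟨L2, hL2e⟩ := hew
  have hD2cast : ((D / 2 : ℕ) : ℝ) = (D : ℝ) / 2 := by
    rw [eq_div_iff (two_ne_zero)]
    exact_mod_cast (by omega : D / 2 * 2 = D)
  -- first thin triangle application: apex B, sides q.reverse and P
  have thin1 : (G.dist (q.getVert k0) (P.getVert (D / 2)) : ℝ) ≤ δ' := by
    have cond : ((D / 2 : ℕ) : ℝ) ≤ gp G B u A := by
      rw [hD2cast]
      simp only [gp]
      rw [← ha, ← hD, ← he]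
      have hea : (e : ℝ) ≤ (a : ℝ) := by exact_mod_cast hswap
      have hDae' : (D : ℝ) ≤ (e : ℝ) + (a : ℝ) := by exact_mod_cast hDae
      linarith
    have hqrev : q.reverse.length = G.dist B u := by
      rw [SimpleGraph.Walk.length_reverse, hq, G.dist_comm (u := B) (v := u)]
    have h := hthin B u A q.reverse P hqrev hP (D / 2) cond
    rwa [SimpleGraph.Walk.getVert_reverse, hq, ← hk0] at h
  -- second thin triangle application: apex u, sides p and q
  have thin2 : (G.dist (p.getVert k) (q.getVert k) : ℝ) ≤ δ' := by
    have cond : (k : ℝ) ≤ gp G u w B := by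
      simp only [gp]
      rw [G.dist_comm (u := w) (v := u), G.dist_comm (u := B) (v := u), ← hL, ← ha, ← hb]
      have hk2 : 2 * k + b ≤ L + a := by omega
      have hk2' : ((2 * k + b : ℕ) : ℝ) ≤ ((L + a : ℕ) : ℝ) := by exact_mod_cast hk2
      push_cast at hk2'
      linarith
    exact hthin u w B p q hp hq k cond
  -- distances along the geodesics q and p
  have hk0a : k0 ≤ a := by omega
  have hkk0 : k ≤ k0 := min_le_left _ _
  have dq : G.dist (q.getVert k) (q.getVert k0) = k0 - k :=
    geo_dist' G hconn q (hq.trans ha) hkk0 (by omega)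
  have hkL : k ≤ L := by omega
  have hmL : m ≤ L := le_trans hmj hjL
  have dp2 : G.dist (p.getVert k) (p.getVert m) = max k m - min k m := by
    rcases le_total k m with hkm | hkm
    · rw [geo_dist' G hconn p hp hkm (by omega)]; omega
    · rw [G.dist_comm, geo_dist' G hconn p hp hkm (by omega)]; omega
  obtain ⟨c1, hc1⟩ : ∃ c, k0 - k = c := ⟨_, rfl⟩
  obtain ⟨c2, hc2⟩ : ∃ c, max k m - min k m = c := ⟨_, rfl⟩
  rw [hc1] at dq
  rw [hc2] at dp2
  -- triangle inequality chain
  have tri : G.dist (P.getVert (D / 2)) (p.getVert m) ≤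
      G.dist (P.getVert (D / 2)) (q.getVert k0) + c1
        + G.dist (q.getVert k) (p.getVert k) + c2 := by
    calc G.dist (P.getVert (D / 2)) (p.getVert m)
        ≤ G.dist (P.getVert (D / 2)) (q.getVert k0) + G.dist (q.getVert k0) (p.getVert m) :=
          hconn.dist_triangle
      _ ≤ G.dist (P.getVert (D / 2)) (q.getVert k0) +
          (G.dist (q.getVert k0) (q.getVert k) + G.dist (q.getVert k) (p.getVert m)) := by
          gcongr; exact hconn.dist_triangle
      _ ≤ G.dist (P.getVert (D / 2)) (q.getVert k0) +
          (G.dist (q.getVert k0) (q.getVert k) +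
            (G.dist (q.getVert k) (p.getVert k) + G.dist (p.getVert k) (p.getVert m))) := by
          gcongr; exact hconn.dist_triangle
      _ = G.dist (P.getVert (D / 2)) (q.getVert k0) + c1
            + G.dist (q.getVert k) (p.getVert k) + c2 := by
          rw [G.dist_comm (u := q.getVert k0) (v := q.getVert k), dq, dp2]; ring
  -- the key arithmetic bound
  have harith : (c1 : ℝ) + (c2 : ℝ) ≤ t / 2 + 2 * δ := by
    have hsplit : 2 * (c1 + c2) + 2 * a ≤ D + L ∨ 2 * (c1 + c2) + L ≤ D := by omega
    have haD' : (a : ℝ) ≤ (D : ℝ) := by exact_mod_cast haD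
    rcases hsplit with hc | hc
    · have hc' : ((2 * (c1 + c2) + 2 * a : ℕ) : ℝ) ≤ ((D + L : ℕ) : ℝ) := by exact_mod_cast hc
      push_cast at hc'
      linarith
    · have hc' : ((2 * (c1 + c2) + L : ℕ) : ℝ) ≤ ((D : ℕ) : ℝ) := by exact_mod_cast hc
      push_cast at hc'
      linarith
  -- put everything together
  have tri' : ((G.dist (P.getVert (D / 2)) (p.getVert m) : ℕ) : ℝ) ≤
      ((G.dist (P.getVert (D / 2)) (q.getVert k0) +  c1
        + G.dist (q.getVert k) (p.getVert k) + c2 : ℕ) : ℝ) := by exact_mod_cast tri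
  push_cast at tri'
  have h1 : (G.dist (P.getVert (D / 2)) (q.getVert k0) : ℝ) ≤ δ' := by
    rwa [G.dist_comm (u := q.getVert k0) (v := P.getVert (D / 2))] at thin1
  have h2 : (G.dist (q.getVert k) (p.getVert k) : ℝ) ≤ δ' := by
    rwa [G.dist_comm (u := p.getVert k) (v := q.getVert k)] at thin2
  linarith

/-- With `r` the midpoint of a diametral shortest walk: if `x` and `y` lie on a shortest
walk `p` from a vertex `u` to a vertex `w` with `d(u,w) > max(diam G - t, 2d(x,u), 2d(y,w))`, then the
portion of `p` between `x` and `y` passes within `t/2 + 4δ̂ + 2δ` of `r`. -/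
theorem stmt15 {V : Type*} [Fintype V] (G : SimpleGraph V) (hconn : G.Connected)
    (δ' δ t : ℝ) (hδ' : 0 ≤ δ') (hδ : 0 ≤ δ) (ht : 0 ≤ t)
    (hthin : ThinTriangles G δ')
    (hfour : ∀ a b c d : V, (G.dist a b : ℝ) + (G.dist c d : ℝ) ≤
      max ((G.dist a c : ℝ) + (G.dist b d : ℝ)) ((G.dist a d : ℝ) + (G.dist b c : ℝ))
        + 2 * δ)
    (u₀ v₀ : V) (h₀ : G.dist u₀ v₀ = G.diam) (he₀ : Even (G.dist u₀ v₀))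
    (p₀ : G.Walk u₀ v₀) (hp₀ : p₀.length = G.dist u₀ v₀)
    (u w x y : V) (p : G.Walk u w) (hp : p.length = G.dist u w)
    (hew : Even (G.dist u w))
    (hlong : (G.dist u w : ℝ) > (G.diam : ℝ) - t)
    (hxu : G.dist u w > 2 * G.dist x u) (hyw : G.dist u w > 2 * G.dist y w)
    (i j : ℕ) (hij : i ≤ j) (hj : j ≤ p.length)
    (hx : p.getVert i = x) (hy : p.getVert j = y) :
    ∃ m : ℕ, i ≤ m ∧ m ≤ j ∧
      (G.dist (p₀.getVert (G.dist u₀ v₀ / 2)) (p.getVert m) : ℝ) ≤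
        t / 2 + 4 * δ' + 2 * δ := by
  have he₀' := he₀
  obtain ⟨n₀, hn₀⟩ := he₀'
  by_cases hsw : G.dist u u₀ ≤ G.dist u v₀
  · obtain ⟨m, h1, h2, h3⟩ := key15 G hconn δ' δ t hδ' hδ hthin hfour u₀ v₀ h₀ he₀
      p₀.reverse
      (by rw [SimpleGraph.Walk.length_reverse, hp₀, G.dist_comm (u := u₀) (v := v₀)])
      u w x y p hp hew hlong hxu hyw i j hij hj hx hy hsw
    refine ⟨m, h1, h2, ?_⟩
    rwa [SimpleGraph.Walk.getVert_reverse, hp₀,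
      (by omega : G.dist u₀ v₀ - G.dist u₀ v₀ / 2 = G.dist u₀ v₀ / 2)] at h3
  · obtain ⟨m, h1, h2, h3⟩ := key15 G hconn δ' δ t hδ' hδ hthin hfour v₀ u₀
      (by rw [G.dist_comm (u := v₀) (v := u₀)]; exact h₀)
      (by rw [G.dist_comm (u := v₀) (v := u₀)]; exact he₀)
      p₀ hp₀ u w x y p hp hew hlong hxu hyw i j hij hj hx hy (le_of_not_ge hsw)
    refine ⟨m, h1, h2, ?_⟩
    rwa [G.dist_comm (u := v₀) (v := u₀)] at h3
end

section
/- Let G be a connected finite simple graph with δ̂-thin triangles, let u, v be vertices with d(u,v) = diam(G) even, and let r be the vertex at distance diam(G)/2 from u on a shortest walk from u to v. If x is a vertex with d(x,r) ≥ diam(G)/2 − t, then max(d(x,u), d(x,v)) ≥ diam(G) − t − δ̂; in particular x lies on a shortest walk of length at least diam(G) − t − δ̂. -/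
lemma dist_getVert_left {V : Type*} {G : SimpleGraph V} (hconn : G.Connected)
    {u v : V} (p : G.Walk u v) (k : ℕ) : G.dist u (p.getVert k) ≤ k := by
  induction p generalizing k with
  | nil => simp [SimpleGraph.Walk.getVert, SimpleGraph.dist_self]
  | @cons a b c h q ih =>
    cases k with
    | zero => simp [SimpleGraph.Walk.getVert]
    | succ k =>
      calc G.dist a ((SimpleGraph.Walk.cons h q).getVert (k+1))
          ≤ G.dist a b + G.dist b (q.getVert k) := hconn.dist_triangle
        _ ≤ 1 + k := by
            have h1 : G.dist a b ≤ 1 := by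
              simpa using SimpleGraph.dist_le (SimpleGraph.Walk.cons h SimpleGraph.Walk.nil)
            exact Nat.add_le_add h1 (ih k)
        _ = k + 1 := by omega

lemma dist_getVert_right {V : Type*} {G : SimpleGraph V}
    {u v : V} (p : G.Walk u v) (k : ℕ) : G.dist (p.getVert k) v ≤ p.length - k := by
  induction p generalizing k with
  | nil => simp [SimpleGraph.Walk.getVert, SimpleGraph.dist_self]
  | @cons a b c h q ih =>
    cases k with
    | zero =>
      simpa [SimpleGraph.Walk.getVert] using
        SimpleGraph.dist_le (SimpleGraph.Walk.cons h q)
    | succ k =>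
      simpa [SimpleGraph.Walk.getVert] using ih k

lemma key_est {V : Type*} {G : SimpleGraph V} (hconn : G.Connected)
    {δ : ℝ} (hthin : ThinTriangles G δ) {u v x : V} {m : ℕ}
    (p : G.Walk u v) (hp : p.length = G.dist u v) (hm : m + m = G.dist u v)
    (hgp : (m : ℝ) ≤ gp G u v x) :
    (G.dist x (p.getVert m) : ℝ) ≤ (G.dist u x : ℝ) - m + δ := by
  obtain ⟨q, hq⟩ := hconn.exists_walk_length_eq_dist u x
  have hthin' := hthin u v x p q hp hq m hgp
  have htri : G.dist v u ≤ G.dist v x + G.dist x u := hconn.dist_triangle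
  have hcom1 : G.dist x u = G.dist u x := SimpleGraph.dist_comm ..
  have hmux : m ≤ G.dist u x := by
    have h0 : (m : ℝ) ≤ (G.dist x u : ℝ) := by
      unfold gp at hgp
      have h1 : (G.dist v u : ℝ) ≤ (G.dist v x : ℝ) + (G.dist x u : ℝ) := by exact_mod_cast htri
      linarith [hgp, h1]
    rw [hcom1] at h0; exact_mod_cast h0
  have h5 : G.dist (q.getVert m) x ≤ G.dist u x - m := by
    simpa [hq] using dist_getVert_right q m
  have h5' : (G.dist (q.getVert m) x : ℝ) ≤ (G.dist u x : ℝ) - m := by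
    rw [← Nat.cast_sub hmux]; exact_mod_cast h5
  have htri2 : G.dist x (p.getVert m) ≤ G.dist x (q.getVert m) + G.dist (q.getVert m) (p.getVert m) :=
    hconn.dist_triangle
  have htri2' : (G.dist x (p.getVert m) : ℝ) ≤ (G.dist x (q.getVert m) : ℝ) + (G.dist (q.getVert m) (p.getVert m) : ℝ) := by
    exact_mod_cast htri2
  have e1 : G.dist x (q.getVert m) = G.dist (q.getVert m) x := SimpleGraph.dist_comm ..
  have e2 : G.dist (q.getVert m) (p.getVert m) = G.dist (p.getVert m) (q.getVert m) := SimpleGraph.dist_comm ..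
  rw [e1, e2] at htri2'
  linarith


/-- If `r` is the midpoint of a diametral shortest walk from `u` to `v` and
`d(x,r) ≥ diam G / 2 - t`, then `max(d(x,u), d(x,v)) ≥ diam G - t - δ̂`; in particular
`x` lies on a shortest walk of length at least `diam G - t - δ̂`. -/
theorem stmt16 {V : Type*} [Fintype V] (G : SimpleGraph V) (hconn : G.Connected)
    (δ : ℝ) (hδ : 0 ≤ δ) (hthin : ThinTriangles G δ)
    (u v : V) (huv : G.dist u v = G.diam) (he : Even (G.dist u v))
    (p : G.Walk u v) (hp : p.length = G.dist u v)
    (t : ℝ) (x : V)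
    (hx : (G.dist x (p.getVert (G.dist u v / 2)) : ℝ) ≥ (G.diam : ℝ) / 2 - t) :
    max (G.dist x u : ℝ) (G.dist x v : ℝ) ≥ (G.diam : ℝ) - t - δ ∧
    ∃ (a b : V) (q : G.Walk a b), q.length = G.dist a b ∧ x ∈ q.support ∧
      (q.length : ℝ) ≥ (G.diam : ℝ) - t - δ := by
  set m : ℕ := G.dist u v / 2 with hmdef
  obtain ⟨c, hc⟩ := he
  have hm : m + m = G.dist u v := by omega
  have hmr : (m : ℝ) + (m : ℝ) = (G.diam : ℝ) := by
    rw [← huv]; exact_mod_cast congrArg (Nat.cast : ℕ → ℝ) hm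
  have hrev : p.reverse.length = G.dist v u := by
    rw [SimpleGraph.Walk.length_reverse, hp, SimpleGraph.dist_comm]
  have hgv : p.reverse.getVert m = p.getVert m := by
    rw [SimpleGraph.Walk.getVert_reverse, hp]
    congr 1
    omega
  have hcom1 : G.dist v u = G.dist u v := SimpleGraph.dist_comm ..
  have hcom2 : G.dist x u = G.dist u x := SimpleGraph.dist_comm ..
  have hcom3 : G.dist x v = G.dist v x := SimpleGraph.dist_comm ..
  have hsum : gp G u v x + gp G v u x = (G.dist u v : ℝ) := by
    unfold gp
    have c1 : (G.dist v u : ℝ) = (G.dist u v : ℝ) := by exact_mod_cast hcom1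
    have c2 : (G.dist x u : ℝ) = (G.dist u x : ℝ) := by exact_mod_cast hcom2
    have c3 : (G.dist x v : ℝ) = (G.dist v x : ℝ) := by exact_mod_cast hcom3
    linarith
  have hDr : (G.dist u v : ℝ) = (G.diam : ℝ) := by exact_mod_cast huv
  have hcase : (m : ℝ) ≤ gp G u v x ∨ (m : ℝ) ≤ gp G v u x := by
    by_contra hcon
    push_neg at hcon
    linarith [hcon.1, hcon.2, hsum, hmr, hDr]
  rcases hcase with hA | hB
  · have hkey := key_est hconn hthin p hp hm hA
    have hux : (G.dist u x : ℝ) ≥ (G.diam : ℝ) - t - δ := by linarith [hx, hkey, hmr]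
    have hxu : (G.dist x u : ℝ) = (G.dist u x : ℝ) := by exact_mod_cast hcom2
    constructor
    · exact le_trans (by linarith) (le_max_left _ _)
    · obtain ⟨q, hq⟩ := hconn.exists_walk_length_eq_dist u x
      exact ⟨u, x, q, hq, q.end_mem_support, by rw [hq]; exact hux⟩
  · have hm' : m + m = G.dist v u := by rw [hcom1]; exact hm
    have hkey := key_est hconn hthin p.reverse hrev hm' hB
    rw [hgv] at hkey
    have hvx : (G.dist v x : ℝ) ≥ (G.diam : ℝ) - t - δ := by linarith [hx, hkey, hmr]
    have hxv : (G.dist x v : ℝ) = (G.dist v x : ℝ) := by exact_mod_cast hcom3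
    constructor
    · exact le_trans (by linarith) (le_max_right _ _)
    · obtain ⟨q, hq⟩ := hconn.exists_walk_length_eq_dist v x
      exact ⟨v, x, q, hq, q.end_mem_support, by rw [hq]; exact hvx⟩
end

section
/- Let G be a connected finite simple graph on n vertices with δ̂-thin triangles whose distance satisfies the four-point condition with constant δ, let b > 1 and 0 < c ≤ 1, suppose d(u₀,v₀) = diam(G) is even for some pair u₀, v₀, and let r be the vertex at distance diam(G)/2 from u₀ on a shortest walk from u₀ to v₀. Assume: (1) for every maximal shortest walk α from u to v of length at least diam(G) − (δ̂ + 2·log_b(2/c)), each of the two sets {z : d(z,u) < d(z,v)} and {z : d(z,v) < d(z,u)} contains at least c·n vertices; (2) for every natural number k with 2k ≤ diam(G), the number n_k of vertices at distance exactly k from r satisfies c·b^k ≤ n_k ≤ c⁻¹·b^k; and (3) diam(G) > 3δ̂ + 6·log_b(2/c). Then there exists a set S of at least (3c³/8)·n² unordered pairs of vertices such that for every pair {x,y} ∈ S, every shortest walk from x to y contains a vertex w with d(r,w) ≤ log_b(2/c) + 6.5·δ̂ + 2δ. -/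
/-- `α` is a maximal shortest walk (geodesic): it is a shortest walk and it is not a
proper subwalk of another shortest walk. -/
def IsMaximalGeodesic {V : Type*} (G : SimpleGraph V) {u v : V} (α : G.Walk u v) : Prop :=
  α.length = G.dist u v ∧
  ∀ (u' v' : V) (β : G.Walk u' v'), β.length = G.dist u' v' →
    (∃ off : ℕ, off + α.length ≤ β.length ∧
      ∀ i ≤ α.length, β.getVert (off + i) = α.getVert i) →
    β.length = α.length

/-!
Let `r` be the midpoint of the diametral geodesic from `u₀` to `v₀`, `D = 2m` the diameter and
`L = log_b(2/c)`. By the sphere bounds the ball of radius `m - 2L` around `r` has at most `n/4`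
vertices, so at least `3n/4` vertices `z` are deep: `d(z, r) ≥ m - 2L`.

Fix a deep `z`, say with `d(z, v₀) ≤ d(z, u₀)`. Thin triangles give `d(z, r) + m ≤ d(u₀, z) + δ̂`,
so a geodesic from `u₀` to `z` has length at least `D - δ̂ - 2L`; extend it to a maximal geodesic
`α` from `u'` to `v'`, which then satisfies the balance hypothesis. For each of the `≥ cn`
vertices `w` closer to `u'` than to `v'`, the four-point condition applied to `z, u', w, r` bounds
the Gromov product `(z.w)_r` by an integer `N ≤ L + 5.5δ̂ + 2δ`; thin triangles then force every
geodesic from `z` to `w` within `N + δ̂` of `r`. This gives `(3n/4)·cn` ordered pairs, hence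
`3cn²/8 ≥ 3c³n²/8` unordered ones.
-/

open Finset SimpleGraph

section

variable {V : Type*} {G : SimpleGraph V}

def FourPointCondition (G : SimpleGraph V) (δ : ℝ) : Prop :=
  ∀ a₁ a₂ a₃ a₄ : V, (G.dist a₁ a₂ : ℝ) + G.dist a₃ a₄ ≤
    max ((G.dist a₁ a₃ : ℝ) + G.dist a₂ a₄) ((G.dist a₁ a₄ : ℝ) + G.dist a₂ a₃) + 2 * δ

lemma SimpleGraph.Walk.dist_getVert_of_length_eq_dist {u v : V} {p : G.Walk u v}
    (hp : p.length = G.dist u v) {i : ℕ} (hi : i ≤ p.length) :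
    G.dist u (p.getVert i) = i ∧ G.dist (p.getVert i) v = p.length - i := by
  have h₁ : G.dist u (p.getVert i) ≤ i := by
    simpa [Walk.take_length, hi] using G.dist_le (p.take i)
  have h₂ : G.dist (p.getVert i) v ≤ p.length - i := by
    simpa using G.dist_le (p.drop i)
  have h₃ := (p.take i).reachable.dist_triangle_left v
  omega

lemma SimpleGraph.Connected.dist_le_diam [Finite V] (hconn : G.Connected) (u v : V) :
    G.dist u v ≤ G.diam :=
  have := hconn.nonempty
  SimpleGraph.dist_le_diam (connected_iff_ediam_ne_top.mp hconn)

lemma gp_comm (r x y : V) : gp G r x y = gp G r y x := by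
  unfold gp
  rw [dist_comm (u := x) (v := y)]
  ring

lemma gp_le_natCast_iff {r x y : V} {N : ℕ} :
    gp G r x y ≤ N ↔ G.dist x r + G.dist y r ≤ 2 * N + G.dist x y := by
  unfold gp
  rw [div_le_iff₀ two_pos, sub_le_iff_le_add, mul_comm]
  exact_mod_cast Iff.rfl

lemma ThinTriangles.dist_getVert_add_le {δ : ℝ} (hthin : ThinTriangles G δ)
    (hconn : G.Connected) {x y : V} {p : G.Walk x y} (hp : p.length = G.dist x y) (z : V)
    {k : ℕ} (hk : (k : ℝ) ≤ gp G x y z) :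
    (G.dist (p.getVert k) z : ℝ) + k ≤ G.dist x z + δ := by
  obtain ⟨q, hq⟩ := hconn.exists_walk_length_eq_dist x z
  have hkz : k ≤ G.dist x z := by
    have : (G.dist y x : ℝ) ≤ G.dist y z + G.dist z x := by exact_mod_cast hconn.dist_triangle
    have : (k : ℝ) ≤ G.dist x z := by unfold gp at hk; rw [dist_comm (u := z)] at *; linarith
    exact_mod_cast this
  have hqk := (q.dist_getVert_of_length_eq_dist hq (hq ▸ hkz)).2
  have hthin_k : (G.dist (p.getVert k) (q.getVert k) : ℝ) ≤ δ := hthin x y z p q hp hq k hk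
  have htri : (G.dist (p.getVert k) z : ℝ) ≤
      G.dist (p.getVert k) (q.getVert k) + G.dist (q.getVert k) z := by
    exact_mod_cast hconn.dist_triangle
  have : (G.dist (q.getVert k) z : ℝ) + k = G.dist x z := by
    rw [hqk, hq]; exact_mod_cast Nat.sub_add_cancel hkz
  linarith

lemma ThinTriangles.dist_getVert_add_le_of_dist_le {δ : ℝ} (hthin : ThinTriangles G δ)
    (hconn : G.Connected) {u v : V} {p : G.Walk u v} (hp : p.length = G.dist u v) {m : ℕ}
    (hm : G.dist u v = 2 * m) {z : V} (hzv : G.dist z v ≤ G.dist z u) :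
    (G.dist z (p.getVert m) : ℝ) + m ≤ G.dist u z + δ := by
  have hgp : (m : ℝ) ≤ gp G u v z := by
    have : (G.dist z v : ℝ) ≤ G.dist z u := by exact_mod_cast hzv
    have : (G.dist v u : ℝ) = 2 * m := by rw [dist_comm]; exact_mod_cast hm
    unfold gp
    rw [dist_comm (u := v) (v := z)]
    linarith
  simpa only [dist_comm (u := z)] using hthin.dist_getVert_add_le hconn hp z hgp

lemma ThinTriangles.exists_mem_support_dist_le {δ : ℝ} (hthin : ThinTriangles G δ)
    (hconn : G.Connected) {r x y : V} {N : ℕ} (hxy : gp G r x y ≤ N) (q : G.Walk x y)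
    (hq : q.length = G.dist x y) :
    ∃ w ∈ q.support, (G.dist r w : ℝ) ≤ N + δ := by
  rw [gp_le_natCast_iff] at hxy
  have hxr : G.dist x r ≤ G.dist x y + G.dist y r := hconn.dist_triangle
  have hyr : G.dist y r ≤ G.dist y x + G.dist x r := hconn.dist_triangle
  rw [dist_comm (u := y) (v := x)] at hyr
  -- `k = ⌊(y.r)_x⌋`
  set k := G.dist x r - (G.dist x r + G.dist y r - G.dist x y + 1) / 2
  have hk : (k : ℝ) ≤ gp G x y r := by
    have : (2 * k + G.dist y r : ℝ) ≤ G.dist x y + G.dist x r := by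
      exact_mod_cast (by omega : 2 * k + G.dist y r ≤ G.dist x y + G.dist x r)
    unfold gp
    rw [dist_comm (u := y) (v := x), dist_comm (u := r) (v := x)]
    linarith
  refine ⟨q.getVert k, q.getVert_mem_support k, ?_⟩
  have h := hthin.dist_getVert_add_le hconn hq r hk
  have : (G.dist x r : ℝ) ≤ k + N := by exact_mod_cast (by omega : G.dist x r ≤ k + N)
  rw [dist_comm]
  linarith

lemma exists_isMaximalGeodesic_extending [Finite V] (hconn : G.Connected) {a b : V}
    (q : G.Walk a b) (hq : q.length = G.dist a b) :
    ∃ (u v : V) (α : G.Walk u v) (off : ℕ), IsMaximalGeodesic G α ∧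
      off + q.length ≤ α.length ∧ ∀ i ≤ q.length, α.getVert (off + i) = q.getVert i := by
  induction h : G.diam - q.length using Nat.strong_induction_on generalizing a b with
  | _ s ih =>
    by_cases hmax : IsMaximalGeodesic G q
    · exact ⟨a, b, q, 0, hmax, by simp, by simp⟩
    unfold IsMaximalGeodesic at hmax
    push Not at hmax
    obtain ⟨u', v', β, hβ, ⟨off, hoff, hβq⟩, hne⟩ := hmax hq
    have hβdiam := hconn.dist_le_diam u' v'
    obtain ⟨u, v, α, off', hα, hoff', hαβ⟩ := ih _ (by omega) β hβ rfl
    refine ⟨u, v, α, off' + off, hα, by omega, fun i hi => ?_⟩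
    rw [add_assoc, hαβ _ (by omega), hβq i hi]

lemma exists_isMaximalGeodesic_dist_eq [Finite V] (hconn : G.Connected) {a b : V}
    (q : G.Walk a b) (hq : q.length = G.dist a b) :
    ∃ (u v : V) (α : G.Walk u v), IsMaximalGeodesic G α ∧
      G.dist u b = G.dist u a + G.dist a b ∧ G.dist u b + G.dist b v = α.length := by
  obtain ⟨u, v, α, off, hα, hoff, hαq⟩ := exists_isMaximalGeodesic_extending hconn q hq
  have ha := α.dist_getVert_of_length_eq_dist hα.1 (i := off) (by omega)
  have hb := α.dist_getVert_of_length_eq_dist hα.1 (i := off + q.length) (by omega)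
  rw [← add_zero off, hαq 0 (Nat.zero_le _), add_zero, q.getVert_zero] at ha
  rw [hαq _ le_rfl, q.getVert_length] at hb
  exact ⟨u, v, α, hα, by omega, by omega⟩

lemma FourPointCondition.gp_le {δ δ' : ℝ} (hfour : FourPointCondition G δ)
    (hconn : G.Connected) (hδ' : 0 ≤ δ') {N : ℕ} (hN : 2 * δ' + 2 * δ < 2 * N + 1)
    {u v z w r : V} (hur : (G.dist u r : ℝ) + G.dist z r ≤ G.dist u z + δ')
    (hzr : 2 * (G.dist z r : ℝ) + G.dist z v ≤ G.dist u z + 2 * δ')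
    (hw : G.dist w u ≤ G.dist w v) : gp G r z w ≤ N := by
  rw [gp_le_natCast_iff]
  by_contra! hzw
  have hzw' : (2 * N + 1 : ℝ) + G.dist z w ≤ G.dist z r + G.dist w r := by
    exact_mod_cast (by omega : 2 * N + 1 + G.dist z w ≤ G.dist z r + G.dist w r)
  have hwv : (G.dist w v : ℝ) ≤ G.dist z w + G.dist z v := by
    rw [dist_comm (u := z) (v := w)]; exact_mod_cast hconn.dist_triangle
  have hw' : (G.dist u w : ℝ) ≤ G.dist w v := by rw [SimpleGraph.dist_comm]; exact_mod_cast hw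
  rcases max_choice ((G.dist z w : ℝ) + G.dist u r) ((G.dist z r : ℝ) + G.dist u w) with h | h
  all_goals have h4 := hfour z u w r; rw [h, dist_comm (u := z) (v := u)] at h4; linarith

lemma card_le_card_filter_gp_le_of_dist_le [Fintype V] {δ δ' c L : ℝ} (hconn : G.Connected)
    (hthin : ThinTriangles G δ') (hfour : FourPointCondition G δ) (hδ' : 0 ≤ δ') {N : ℕ}
    (hN : 2 * δ' + 2 * δ < 2 * N + 1)
    (hbal : ∀ (u v : V) (α : G.Walk u v), IsMaximalGeodesic G α →
      (α.length : ℝ) ≥ (G.diam : ℝ) - (δ' + 2 * L) →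
      c * Fintype.card V ≤ (#{z | G.dist z u < G.dist z v} : ℝ))
    {u v : V} {m : ℕ} (p : G.Walk u v) (hp : p.length = G.dist u v)
    (hdiam : G.dist u v = G.diam) (hm : G.dist u v = 2 * m) {z : V}
    (hzv : G.dist z v ≤ G.dist z u) (hdeep : (m : ℝ) - 2 * L ≤ G.dist z (p.getVert m)) :
    c * Fintype.card V ≤ (#{w | gp G (p.getVert m) z w ≤ N} : ℝ) := by
  set r := p.getVert m
  have hur : G.dist u r = m := (p.dist_getVert_of_length_eq_dist hp (by omega)).1
  have hzr := hthin.dist_getVert_add_le_of_dist_le hconn hp hm hzv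
  obtain ⟨q, hq⟩ := hconn.exists_walk_length_eq_dist u z
  obtain ⟨u', v', α, hα, hu'z, hzv'⟩ := exists_isMaximalGeodesic_dist_eq hconn q hq
  have hαm : α.length ≤ 2 * m := hm ▸ hdiam ▸ hα.1 ▸ hconn.dist_le_diam u' v'
  have hlong : (α.length : ℝ) ≥ (G.diam : ℝ) - (δ' + 2 * L) := by
    have : (G.dist u z : ℝ) ≤ α.length := by exact_mod_cast (by omega : G.dist u z ≤ α.length)
    have : (G.diam : ℝ) = 2 * m := by exact_mod_cast hdiam ▸ hm
    linarith
  have hu'z' : (G.dist u' z : ℝ) = G.dist u' u + G.dist u z := by exact_mod_cast hu'z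
  have hzv'' : (G.dist u' z : ℝ) + G.dist z v' ≤ 2 * m := by
    exact_mod_cast (by omega : G.dist u' z + G.dist z v' ≤ 2 * m)
  have hu'r : (G.dist u' r : ℝ) ≤ G.dist u' u + m := by
    exact_mod_cast (hur ▸ hconn.dist_triangle : G.dist u' r ≤ G.dist u' u + m)
  have hsub : ({w | G.dist w u' < G.dist w v'} : Finset V) ⊆
      ({w | gp G r z w ≤ N} : Finset V) := by
    intro w hw
    simp only [mem_filter, mem_univ, true_and] at hw ⊢
    exact hfour.gp_le hconn hδ' hN (z := z) (r := r) (by linarith) (by linarith) hw.le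
  exact (hbal u' v' α hα hlong).trans (by exact_mod_cast card_le_card hsub)

lemma card_le_card_filter_gp_le [Fintype V] {δ δ' c L : ℝ} (hconn : G.Connected)
    (hthin : ThinTriangles G δ') (hfour : FourPointCondition G δ) (hδ' : 0 ≤ δ') {N : ℕ}
    (hN : 2 * δ' + 2 * δ < 2 * N + 1)
    (hbal : ∀ (u v : V) (α : G.Walk u v), IsMaximalGeodesic G α →
      (α.length : ℝ) ≥ (G.diam : ℝ) - (δ' + 2 * L) →
      c * Fintype.card V ≤ (#{z | G.dist z u < G.dist z v} : ℝ))
    {u v : V} {m : ℕ} (p : G.Walk u v) (hp : p.length = G.dist u v)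
    (hdiam : G.dist u v = G.diam) (hm : G.dist u v = 2 * m) {z : V}
    (hdeep : (m : ℝ) - 2 * L ≤ G.dist z (p.getVert m)) :
    c * Fintype.card V ≤ (#{w | gp G (p.getVert m) z w ≤ N} : ℝ) := by
  rcases le_total (G.dist z v) (G.dist z u) with hzv | hzu
  · exact card_le_card_filter_gp_le_of_dist_le hconn hthin hfour hδ' hN hbal p hp hdiam hm hzv
      hdeep
  · have hr : p.reverse.getVert m = p.getVert m := by
      rw [Walk.getVert_reverse, hp, hm, show 2 * m - m = m by omega]
    rw [← hr] at hdeep ⊢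
    exact card_le_card_filter_gp_le_of_dist_le hconn hthin hfour hδ' hN hbal p.reverse
      (by rw [Walk.length_reverse, hp, dist_comm]) (by rw [dist_comm, hdiam])
      (by rw [dist_comm, hm]) hzu hdeep

/- `N = ⌊L + 5.5δ̂ + 2δ⌋` is the paper's radius; the four-point step only needs
`2N + 1 > 2δ̂ + 2δ`. -/
lemma exists_nat_two_mul_add_one_gt {δ δ' L : ℝ} (hL : 0 ≤ L) (hδ : 0 ≤ δ) (hδ' : 0 ≤ δ') :
    ∃ N : ℕ, 2 * δ' + 2 * δ < 2 * N + 1 ∧ N + δ' ≤ L + 6.5 * δ' + 2 * δ := by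
  refine ⟨⌊L + 5.5 * δ' + 2 * δ⌋₊, ?_, ?_⟩
  · have := Nat.lt_floor_add_one (L + 5.5 * δ' + 2 * δ)
    have := (⌊L + 5.5 * δ' + 2 * δ⌋₊).cast_nonneg (α := ℝ)
    rcases lt_or_ge (2 * δ' + 2 * δ) 1 with h | h <;> linarith
  · linarith [Nat.floor_le (by positivity : 0 ≤ L + 5.5 * δ' + 2 * δ)]

lemma pow_mul_sum_range_le {f : ℕ → ℝ} {b c : ℝ} (hb : 0 ≤ b) (hc : 0 < c) {m t : ℕ}
    (hlow : ∀ k ≤ m, c * b ^ k ≤ f k) (hup : ∀ k ≤ m, f k ≤ c⁻¹ * b ^ k) :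
    b ^ t * ∑ k ∈ range (m + 1 - t), f k ≤ c⁻¹ ^ 2 * ∑ k ∈ range (m + 1), f k := by
  have hlow' : ∀ k ≤ m, b ^ k ≤ c⁻¹ * f k := fun k hk => by
    rw [le_inv_mul_iff₀ hc]; exact hlow k hk
  calc b ^ t * ∑ k ∈ range (m + 1 - t), f k
      ≤ b ^ t * ∑ k ∈ range (m + 1 - t), c⁻¹ * b ^ k := by
        gcongr with k hk
        exact hup k (by rw [mem_range] at hk; omega)
    _ = c⁻¹ * ∑ j ∈ Ico t (m + 1), b ^ j := by
        rw [sum_Ico_eq_sum_range, mul_sum, mul_sum]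
        exact sum_congr rfl fun k _ => by ring
    _ ≤ c⁻¹ * ∑ j ∈ range (m + 1), b ^ j := by
        gcongr
        intro j
        simp only [mem_Ico, mem_range]
        omega
    _ ≤ c⁻¹ * ∑ j ∈ range (m + 1), c⁻¹ * f j := by
        gcongr with j hj
        exact hlow' j (by rw [mem_range] at hj; omega)
    _ = c⁻¹ ^ 2 * ∑ k ∈ range (m + 1), f k := by rw [← mul_sum]; ring

lemma pow_mul_card_filter_add_le [Fintype V] (d : V → ℕ) {b c : ℝ} (hb : 0 ≤ b) (hc : 0 < c)
    {m : ℕ}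
    (hsph : ∀ k ≤ m, c * b ^ k ≤ (#{a | d a = k} : ℝ) ∧ (#{a | d a = k} : ℝ) ≤ c⁻¹ * b ^ k)
    (t : ℕ) :
    b ^ t * #{a | d a + t ≤ m} ≤ c⁻¹ ^ 2 * Fintype.card V := by
  have hshallow : #{a | d a + t ≤ m} = ∑ k ∈ range (m + 1 - t), #{a | d a = k} := by
    rw [sum_card_fiberwise_eq_card_filter]
    congr 2
    ext a
    simp only [mem_range]
    omega
  have hball : ∑ k ∈ range (m + 1), (#{a | d a = k} : ℝ) ≤ Fintype.card V := by
    rw [← Nat.cast_sum, sum_card_fiberwise_eq_card_filter]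
    exact_mod_cast card_le_univ _
  rw [hshallow, Nat.cast_sum]
  refine (pow_mul_sum_range_le hb hc (fun k hk => (hsph k hk).1)
    (fun k hk => (hsph k hk).2)).trans ?_
  gcongr

lemma three_div_four_mul_card_le_card_filter [Fintype V] (d : V → ℕ) {b c s : ℝ} (hb : 1 ≤ b)
    (hc : 0 < c) (hs : 0 ≤ s) (hbs : (2 / c) ^ 2 ≤ b ^ s) {m : ℕ}
    (hsph : ∀ k ≤ m, c * b ^ k ≤ (#{a | d a = k} : ℝ) ∧ (#{a | d a = k} : ℝ) ≤ c⁻¹ * b ^ k) :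
    3 / 4 * (Fintype.card V : ℝ) ≤ #{a | (m : ℝ) - s ≤ d a} := by
  set t := ⌈s⌉₊
  have hbt : c⁻¹ ^ 2 * 4 ≤ b ^ t := calc
    c⁻¹ ^ 2 * 4 = (2 / c) ^ 2 := by ring
    _ ≤ b ^ s := hbs
    _ ≤ b ^ t := by
      rw [← Real.rpow_natCast]; exact Real.rpow_le_rpow_of_exponent_le hb (Nat.le_ceil s)
  have hshallow := pow_mul_card_filter_add_le d (by linarith) hc hsph t
  have hsplit : (#{a | d a + t ≤ m} : ℝ) + #{a | m < d a + t} = Fintype.card V := by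
    rw [← card_univ, ← card_filter_add_card_filter_not (s := univ) (fun a => d a + t ≤ m)]
    simp only [not_le, Nat.cast_add]
  have hdeep : #{a | m < d a + t} ≤ #{a | (m : ℝ) - s ≤ d a} := by
    refine card_le_card fun a ha => ?_
    simp only [mem_filter, mem_univ, true_and] at ha ⊢
    have h₁ : (m : ℝ) + 1 ≤ d a + t := by exact_mod_cast ha
    have h₂ : (t : ℝ) < s + 1 := Nat.ceil_lt_add_one hs
    linarith
  have h4 : c⁻¹ ^ 2 * (4 * #{a | d a + t ≤ m}) ≤ c⁻¹ ^ 2 * Fintype.card V := by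
    have := mul_le_mul_of_nonneg_right hbt (Nat.cast_nonneg (α := ℝ) #{a | d a + t ≤ m})
    linarith
  have := le_of_mul_le_mul_left h4 (by positivity)
  have : (#{a | m < d a + t} : ℝ) ≤ #{a | (m : ℝ) - s ≤ d a} := by exact_mod_cast hdeep
  linarith

lemma card_le_two_mul_card_image_sym2Mk [DecidableEq V] (s : Finset (V × V)) :
    #s ≤ 2 * #(s.image Sym2.mk.uncurry) := by
  refine card_le_mul_card_image s 2 fun e _ => ?_
  induction e using Sym2.ind with
  | _ a b =>
    calc #{p ∈ s | Sym2.mk.uncurry p = s(a, b)} ≤ #({(a, b), (b, a)} : Finset (V × V)) := by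
          refine card_le_card fun p hp => ?_
          obtain ⟨x, y⟩ := p
          simp only [mem_filter, Function.uncurry_apply_pair, Sym2.eq_iff] at hp
          rcases hp.2 with ⟨rfl, rfl⟩ | ⟨rfl, rfl⟩ <;> simp
      _ ≤ 2 := card_le_two

lemma exists_finset_sym2_mul_le_two_mul_card [Fintype V] [DecidableEq V] {P : V → V → Prop}
    [DecidableRel P] (hP : ∀ x y, P x y → P y x) (s : Finset V) {a : ℝ}
    (hs : ∀ z ∈ s, a ≤ #{w | P z w}) :
    ∃ S : Finset (Sym2 V), #s * a ≤ 2 * #S ∧ ∀ x y, s(x, y) ∈ S → P x y := by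
  set O : Finset (V × V) := {p ∈ s ×ˢ univ | P p.1 p.2}
  refine ⟨O.image Sym2.mk.uncurry, ?_, fun x y hxy => ?_⟩
  · have hO : #O = ∑ z ∈ s, #{w | P z w} := by simp only [O, card_filter, sum_product]
    calc #s * a = ∑ _z ∈ s, a := by rw [sum_const, nsmul_eq_mul]
      _ ≤ ∑ z ∈ s, (#{w | P z w} : ℝ) := sum_le_sum hs
      _ = #O := by rw [hO, Nat.cast_sum]
      _ ≤ 2 * #(O.image Sym2.mk.uncurry) := by exact_mod_cast card_le_two_mul_card_image_sym2Mk O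
  · obtain ⟨⟨x', y'⟩, hp, he⟩ := mem_image.mp hxy
    rcases Sym2.eq_iff.mp he with ⟨rfl, rfl⟩ | ⟨rfl, rfl⟩
    · exact (mem_filter.mp hp).2
    · exact hP _ _ (mem_filter.mp hp).2

end

theorem stmt17_general {V : Type*} [Fintype V] (G : SimpleGraph V) (hconn : G.Connected)
    (n : ℕ) (hn : Fintype.card V = n)
    (δ' δ b c : ℝ) (hδ' : 0 ≤ δ') (hδ : 0 ≤ δ) (hb : 1 < b) (hc0 : 0 < c) (hc1 : c ≤ 1)
    (hthin : ThinTriangles G δ')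
    (hfour : ∀ a₁ a₂ a₃ a₄ : V, (G.dist a₁ a₂ : ℝ) + (G.dist a₃ a₄ : ℝ) ≤
      max ((G.dist a₁ a₃ : ℝ) + (G.dist a₂ a₄ : ℝ))
        ((G.dist a₁ a₄ : ℝ) + (G.dist a₂ a₃ : ℝ)) + 2 * δ)
    (u₀ v₀ : V) (h₀ : G.dist u₀ v₀ = G.diam) (he₀ : Even (G.dist u₀ v₀))
    (p₀ : G.Walk u₀ v₀) (hp₀ : p₀.length = G.dist u₀ v₀)
    (hbal1 : ∀ (u v : V) (α : G.Walk u v), IsMaximalGeodesic G α →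
      (α.length : ℝ) ≥ (G.diam : ℝ) - (δ' + 2 * Real.logb b (2 / c)) →
      c * n ≤ ((Finset.univ.filter fun z : V => G.dist z u < G.dist z v).card : ℝ) ∧
      c * n ≤ ((Finset.univ.filter fun z : V => G.dist z v < G.dist z u).card : ℝ))
    (hbal2 : ∀ k : ℕ, 2 * k ≤ G.diam →
      c * b ^ k ≤
          ((Finset.univ.filter
            fun a : V => G.dist a (p₀.getVert (G.dist u₀ v₀ / 2)) = k).card : ℝ) ∧
      ((Finset.univ.filter
          fun a : V => G.dist a (p₀.getVert (G.dist u₀ v₀ / 2)) = k).card : ℝ) ≤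
        c⁻¹ * b ^ k) :
    ∃ S : Finset (Sym2 V), (3 * c ^ 3 / 8) * (n : ℝ) ^ 2 ≤ (S.card : ℝ) ∧
      ∀ x y : V, s(x, y) ∈ S → ∀ q : G.Walk x y, q.length = G.dist x y →
        ∃ w ∈ q.support,
          (G.dist (p₀.getVert (G.dist u₀ v₀ / 2)) w : ℝ) ≤
            Real.logb b (2 / c) + 6.5 * δ' + 2 * δ := by
  classical
  subst hn
  obtain ⟨m, hm⟩ := he₀
  have hm2 : G.dist u₀ v₀ = 2 * m := by omega
  rw [show G.dist u₀ v₀ / 2 = m by omega] at hbal2 ⊢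
  set L := Real.logb b (2 / c)
  have hL : 0 ≤ L := Real.logb_nonneg hb (by rw [le_div_iff₀ hc0]; linarith)
  obtain ⟨N, hN, hNL⟩ := exists_nat_two_mul_add_one_gt hL hδ hδ'
  have hbL : (2 / c) ^ 2 ≤ b ^ (2 * L) := by
    rw [mul_comm, Real.rpow_mul (by linarith), Real.rpow_logb (by linarith) hb.ne' (by positivity),
      Real.rpow_two]
  have hdeep := three_div_four_mul_card_le_card_filter (fun a => G.dist a (p₀.getVert m)) hb.le
    hc0 (by positivity) hbL (m := m) fun k hk => hbal2 k (by omega)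
  obtain ⟨S, hS, hSgp⟩ := exists_finset_sym2_mul_le_two_mul_card
    (fun x y h => (gp_comm (G := G) _ y x).trans_le h) _ fun z hz =>
      card_le_card_filter_gp_le (N := N) hconn hthin hfour hδ' hN
        (fun u v α h₁ h₂ => (hbal1 u v α h₁ h₂).1) p₀ hp₀ h₀ hm2 (mem_filter.mp hz).2
  refine ⟨S, ?_, fun x y hxy q hq => ?_⟩
  · have hc3 : c ^ 3 ≤ c := pow_le_of_le_one hc0.le hc1 (by norm_num)
    have : (0 : ℝ) ≤ c * Fintype.card V := by positivity
    calc 3 * c ^ 3 / 8 * (Fintype.card V : ℝ) ^ 2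
        ≤ 3 / 4 * Fintype.card V * (c * Fintype.card V) / 2 := by
          nlinarith [sq_nonneg (Fintype.card V : ℝ)]
      _ ≤ #S := by linarith [mul_le_mul_of_nonneg_right hdeep this]
  · obtain ⟨w, hw, hrw⟩ := hthin.exists_mem_support_dist_le hconn (hSgp x y hxy) q hq
    exact ⟨w, hw, by linarith⟩

/-- In a balanced hyperbolic network, there are at least `(3c³/8)·n²` unordered pairs of
vertices all of whose shortest walks pass within `log_b(2/c) + 6.5δ̂ + 2δ` of the
center `r`. -/
theorem stmt17 {V : Type*} [Fintype V] (G : SimpleGraph V) (hconn : G.Connected)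
    (n : ℕ) (hn : Fintype.card V = n)
    (δ' δ b c : ℝ) (hδ' : 0 ≤ δ') (hδ : 0 ≤ δ) (hb : 1 < b) (hc0 : 0 < c) (hc1 : c ≤ 1)
    (hthin : ThinTriangles G δ')
    (hfour : ∀ a₁ a₂ a₃ a₄ : V, (G.dist a₁ a₂ : ℝ) + (G.dist a₃ a₄ : ℝ) ≤
      max ((G.dist a₁ a₃ : ℝ) + (G.dist a₂ a₄ : ℝ))
        ((G.dist a₁ a₄ : ℝ) + (G.dist a₂ a₃ : ℝ)) + 2 * δ)
    (u₀ v₀ : V) (h₀ : G.dist u₀ v₀ = G.diam) (he₀ : Even (G.dist u₀ v₀))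
    (p₀ : G.Walk u₀ v₀) (hp₀ : p₀.length = G.dist u₀ v₀)
    (hbal1 : ∀ (u v : V) (α : G.Walk u v), IsMaximalGeodesic G α →
      (α.length : ℝ) ≥ (G.diam : ℝ) - (δ' + 2 * Real.logb b (2 / c)) →
      c * n ≤ ((Finset.univ.filter fun z : V => G.dist z u < G.dist z v).card : ℝ) ∧
      c * n ≤ ((Finset.univ.filter fun z : V => G.dist z v < G.dist z u).card : ℝ))
    (hbal2 : ∀ k : ℕ, 2 * k ≤ G.diam →
      c * b ^ k ≤
          ((Finset.univ.filter
            fun a : V => G.dist a (p₀.getVert (G.dist u₀ v₀ / 2)) = k).card : ℝ) ∧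
      ((Finset.univ.filter
          fun a : V => G.dist a (p₀.getVert (G.dist u₀ v₀ / 2)) = k).card : ℝ) ≤
        c⁻¹ * b ^ k)
    (hdiam : (G.diam : ℝ) > 3 * δ' + 6 * Real.logb b (2 / c)) :
    ∃ S : Finset (Sym2 V), (3 * c ^ 3 / 8) * (n : ℝ) ^ 2 ≤ (S.card : ℝ) ∧
      ∀ x y : V, s(x, y) ∈ S → ∀ q : G.Walk x y, q.length = G.dist x y →
        ∃ w ∈ q.support,
          (G.dist (p₀.getVert (G.dist u₀ v₀ / 2)) w : ℝ) ≤
            Real.logb b (2 / c) + 6.5 * δ' + 2 * δ :=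
  stmt17_general G hconn n hn δ' δ b c hδ' hδ hb hc0 hc1 hthin hfour u₀ v₀ h₀ he₀ p₀ hp₀ hbal1 hbal2
end
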